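/- arXiv:1202.2561 — 7 statements merged into one kernel-verified Lean document; each statement's English description precedes it below -/
import Mathlib

section
/- For every real γ ≥ 0, the infimum of γ11 + γ21 over all pairs (γ11, γ21) of nonnegative reals satisfying r1 ≥ [1 − γ11 − [β − γ21 − b]⁺]⁺ equals [1 − r1 − [β − b]⁺]⁺, where [x]⁺ := max(x,0), and the parameters satisfy 0 ≤ r1 ≤ 1, 0 ≤ β ≤ 1, b ≥ 0. -/
/-!
Raising `γ21` only shrinks `[β - γ21 - b]⁺` and so only tightens the outage condition on `γ11`;
hence the cheapest outage point has `γ21 = 0` and `γ11 = [1 - r1 - [β - b]⁺]⁺`.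
-/

lemma max_one_sub_sub_max_le_add {r1 β b g11 g21 : ℝ} (hg11 : 0 ≤ g11) (hg21 : 0 ≤ g21)
    (hout : max (1 - g11 - max (β - g21 - b) 0) 0 ≤ r1) :
    max (1 - r1 - max (β - b) 0) 0 ≤ g11 + g21 := by
  have hmono : max (β - g21 - b) 0 ≤ max (β - b) 0 := max_le_max (by linarith) le_rfl
  have hout_left : 1 - g11 - max (β - g21 - b) 0 ≤ r1 := (le_max_left _ _).trans hout
  exact max_le (by linarith) (by linarith)

theorem stmt_0_general (r1 β b : ℝ) (hr1 : 0 ≤ r1) :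
    sInf {s : ℝ | ∃ g11 g21 : ℝ, 0 ≤ g11 ∧ 0 ≤ g21 ∧
        r1 ≥ max (1 - g11 - max (β - g21 - b) 0) 0 ∧ s = g11 + g21}
      = max (1 - r1 - max (β - b) 0) 0 := by
  refine IsLeast.csInf_eq ⟨⟨_, 0, le_max_right _ _, le_rfl, ?_, (add_zero _).symm⟩, ?_⟩
  · rw [sub_zero]
    exact max_le (by linarith [le_max_left (1 - r1 - max (β - b) 0) 0]) hr1
  · rintro _ ⟨g11, g21, hg11, hg21, hout, rfl⟩
    exact max_one_sub_sub_max_le_add hg11 hg21 hout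

/-- Outage exponent `d11_HK` for the first outage event at receiver 1 of the
Han–Kobayashi scheme in the Z-interference channel. -/
theorem stmt_0 (r1 β b : ℝ) (hr1 : 0 ≤ r1) (hr1' : r1 ≤ 1)
    (hβ : 0 ≤ β) (hβ' : β ≤ 1) (hb : 0 ≤ b) :
    sInf {s : ℝ | ∃ g11 g21 : ℝ, 0 ≤ g11 ∧ 0 ≤ g21 ∧
        r1 ≥ max (1 - g11 - max (β - g21 - b) 0) 0 ∧ s = g11 + g21}
      = max (1 - r1 - max (β - b) 0) 0 :=
  stmt_0_general r1 β b hr1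
end

section
/- Define [x]⁺ := max(x,0), d1_CMO(r1,r2,β) := min{[1−r1]⁺, [1−r1−r2]⁺ + [β−r1−r2]⁺}, d11(b) := [1−r1−[β−b]⁺]⁺, and d12(t2,b) := [1−r1−t2]⁺ + [β−r1−t2]⁺ if b ≥ r1+t2, else [1−r1−t2−[β−b]⁺]⁺, with d1_HK(t2,b) := min{d11(b), d12(t2,b)}. If 0 ≤ r1, 0 ≤ r2, 0 ≤ t2 ≤ r2, b ≥ 0, and β ≥ r1 + 2r2, then d1_HK(t2,b) ≤ d1_CMO(r1,r2,β). -/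
/-! The first term `d11(b)` of `d1_HK` never exceeds the interference-free diversity `[1 - r1]⁺`.
When `β ≥ r1 + 2 r2`, writing `1 - r1 = (1 - r1 - r2) + r2` with `r2 ≤ β - r1 - r2` shows that
`[1 - r1]⁺` is also at most the second term of `d1_CMO`, so `[1 - r1]⁺ = d1_CMO`. -/

lemma max_zero_le_max_zero_add_max_zero {α : Type*} [AddCommGroup α] [LinearOrder α]
    [IsOrderedAddMonoid α] {x y z : α} (h : x ≤ y + z) : max x 0 ≤ max y 0 + max z 0 :=
  calc max x 0 ≤ max (y + z) (0 + 0) := by rw [add_zero]; exact max_le_max h le_rfl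
    _ ≤ max y 0 + max z 0 := max_add_add_le_max_add_max

lemma max_sub_zero_le_max_zero {α : Type*} [AddCommGroup α] [LinearOrder α]
    [IsOrderedAddMonoid α] {a : α} (x : α) (ha : 0 ≤ a) : max (x - a) 0 ≤ max x 0 :=
  max_le_max (sub_le_self x ha) le_rfl

theorem stmt_3_general (r1 r2 β t2 b : ℝ) (hβ : r1 + 2 * r2 ≤ β) :
    min (max (1 - r1 - max (β - b) 0) 0)
        (if r1 + t2 ≤ b then max (1 - r1 - t2) 0 + max (β - r1 - t2) 0
         else max (1 - r1 - t2 - max (β - b) 0) 0)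
      ≤ min (max (1 - r1) 0) (max (1 - r1 - r2) 0 + max (β - r1 - r2) 0) := by
  have hd11 : max (1 - r1 - max (β - b) 0) 0 ≤ max (1 - r1) 0 :=
    max_sub_zero_le_max_zero _ (le_max_right _ _)
  have hcmo : max (1 - r1) 0 ≤ max (1 - r1 - r2) 0 + max (β - r1 - r2) 0 :=
    max_zero_le_max_zero_add_max_zero (by linarith)
  exact (min_le_left _ _).trans (hd11.trans (le_min le_rfl hcmo))

/-- Part 1 of the structural lemma: for `β ≥ r1 + 2 r2`, no
Han–Kobayashi split beats the common-message-only receiver-1 diversity. -/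
theorem stmt_3 (r1 r2 β t2 b : ℝ) (hr1 : 0 ≤ r1) (hr2 : 0 ≤ r2)
    (ht2 : 0 ≤ t2) (ht2' : t2 ≤ r2) (hb : 0 ≤ b) (hβ : r1 + 2 * r2 ≤ β) :
    min (max (1 - r1 - max (β - b) 0) 0)
        (if r1 + t2 ≤ b then max (1 - r1 - t2) 0 + max (β - r1 - t2) 0
         else max (1 - r1 - t2 - max (β - b) 0) 0)
      ≤ min (max (1 - r1) 0) (max (1 - r1 - r2) 0 + max (β - r1 - r2) 0) :=
  stmt_3_general r1 r2 β t2 b hβ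
end

section
/- With [x]⁺ := max(x,0), d1_CMO := min{[1−r1]⁺, [1−r1−r2]⁺ + [β−r1−r2]⁺}, d11(b) := [1−r1−[β−b]⁺]⁺, d12(t2,b) := [1−r1−t2]⁺ + [β−r1−t2]⁺ if b ≥ r1+t2 else [1−r1−t2−[β−b]⁺]⁺, and d1_HK(t2,b) := min{d11(b), d12(t2,b)}: if 0 ≤ r1 ≤ 1, 0 ≤ r2, 0 ≤ t2 ≤ r2, r1 + r2 ≤ β < r1 + 2r2, β ≤ 1, and b ≥ max{r1 + t2, 2β − (r1 + 2r2)}, then d1_HK(t2,b) ≥ d1_CMO. -/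
/-!
Since `b ≥ r1 + t2`, the second Han–Kobayashi term `d12` takes its first branch, which is antitone
in `t2` and therefore dominates its value at `t2 = r2`, the second term of `d1_CMO`. For `d11`:
when `r1 + r2 ≤ β ≤ 1` both brackets of that CMO term are active, so it equals
`1 + β - 2 r1 - 2 r2`, and this is at most `1 - r1 - [β - b]⁺` precisely because
`β ≤ r1 + 2 r2` and `b ≥ 2 β - (r1 + 2 r2)`.
-/

lemma max_sub_zero_add_max_sub_zero_antitone {a c s t : ℝ} (hst : s ≤ t) :
    max (a - t) 0 + max (c - t) 0 ≤ max (a - s) 0 + max (c - s) 0 := by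
  gcongr

lemma sub_add_sub_le_max_sub_max_sub_zero {r1 r2 β b : ℝ}
    (hβ : β ≤ r1 + 2 * r2) (hb : 2 * β - (r1 + 2 * r2) ≤ b) :
    (1 - r1 - r2) + (β - r1 - r2) ≤ max (1 - r1 - max (β - b) 0) 0 := by
  refine le_max_of_le_left ?_
  have hsplit : max (β - b) 0 ≤ r1 + 2 * r2 - β := max_le (by linarith) (by linarith)
  linarith

theorem stmt_4_general (r1 r2 β t2 b : ℝ) (ht2' : t2 ≤ r2)
    (hβ1 : r1 + r2 ≤ β) (hβ2 : β < r1 + 2 * r2) (hβ3 : β ≤ 1)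
    (hb : max (r1 + t2) (2 * β - (r1 + 2 * r2)) ≤ b) :
    min (max (1 - r1 - max (β - b) 0) 0)
        (if r1 + t2 ≤ b then max (1 - r1 - t2) 0 + max (β - r1 - t2) 0
         else max (1 - r1 - t2 - max (β - b) 0) 0)
      ≥ min (max (1 - r1) 0) (max (1 - r1 - r2) 0 + max (β - r1 - r2) 0) := by
  obtain ⟨hb1, hb2⟩ := max_le_iff.mp hb
  rw [if_pos hb1]
  refine le_min ?_ ((min_le_right _ _).trans (max_sub_zero_add_max_sub_zero_antitone ht2'))
  calc min (max (1 - r1) 0) (max (1 - r1 - r2) 0 + max (β - r1 - r2) 0)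
      ≤ max (1 - r1 - r2) 0 + max (β - r1 - r2) 0 := min_le_right _ _
    _ = (1 - r1 - r2) + (β - r1 - r2) := by
      rw [max_eq_left (by linarith), max_eq_left (by linarith)]
    _ ≤ max (1 - r1 - max (β - b) 0) 0 := sub_add_sub_le_max_sub_max_sub_zero hβ2.le hb2

/-- Part 2 of the structural lemma: for `r1 + r2 ≤ β < r1 + 2 r2` and large
enough power split `b`, the Han–Kobayashi receiver-1 diversity dominates
the common-message-only one. -/
theorem stmt_4 (r1 r2 β t2 b : ℝ) (hr1 : 0 ≤ r1) (hr1' : r1 ≤ 1) (hr2 : 0 ≤ r2)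
    (ht2 : 0 ≤ t2) (ht2' : t2 ≤ r2)
    (hβ1 : r1 + r2 ≤ β) (hβ2 : β < r1 + 2 * r2) (hβ3 : β ≤ 1)
    (hb : max (r1 + t2) (2 * β - (r1 + 2 * r2)) ≤ b) :
    min (max (1 - r1 - max (β - b) 0) 0)
        (if r1 + t2 ≤ b then max (1 - r1 - t2) 0 + max (β - r1 - t2) 0
         else max (1 - r1 - t2 - max (β - b) 0) 0)
      ≥ min (max (1 - r1) 0) (max (1 - r1 - r2) 0 + max (β - r1 - r2) 0) :=
  stmt_4_general r1 r2 β t2 b ht2' hβ1 hβ2 hβ3 hb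
end

section
/- With the notation d1_CMO := min{[1−r1]⁺, [1−r1−r2]⁺ + [β−r1−r2]⁺}, d11(b) := [1−r1−[β−b]⁺]⁺, d12(t2,b) := [1−r1−t2]⁺ + [β−r1−t2]⁺ if b ≥ r1+t2 else [1−r1−t2−[β−b]⁺]⁺, d1_HK := min{d11, d12}, and [x]⁺ := max(x,0): if 0 ≤ r1 ≤ 1, 0 ≤ r2 ≤ 1, 0 ≤ t2 ≤ r2, 0 ≤ β < r1 + r2, β ≤ 1, and b ≥ β − (min{r2, 1−r1} − t2), then d1_HK(t2,b) ≥ d1_CMO. -/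
/-
Since β < r1 + r2, the term [β − r1 − r2]⁺ vanishes and the common-message-only diversity is at most
[1 − r1 − r2]⁺. The condition on b bounds the interference loss [β − b]⁺ by r2 − t2, so each of the
Han–Kobayashi terms subtracts at most r1 + r2 from 1 and is at least [1 − r1 − r2]⁺.
-/

lemma cmo_diversity_le_posPart {r1 r2 β : ℝ} (hβ : β < r1 + r2) :
    min (max (1 - r1) 0) (max (1 - r1 - r2) 0 + max (β - r1 - r2) 0) ≤ max (1 - r1 - r2) 0 := by
  have hvanish : max (β - r1 - r2) 0 = 0 := max_eq_right (by linarith)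
  simpa only [hvanish, add_zero] using min_le_right (max (1 - r1) 0) (max (1 - r1 - r2) 0)

lemma interference_loss_le {r1 r2 β t2 b : ℝ} (ht2' : t2 ≤ r2)
    (hb : β - (min r2 (1 - r1) - t2) ≤ b) : max (β - b) 0 ≤ r2 - t2 :=
  max_le (by linarith [min_le_left r2 (1 - r1)]) (sub_nonneg.2 ht2')

theorem stmt_5_general (r1 r2 β t2 b : ℝ) (ht2 : 0 ≤ t2) (ht2' : t2 ≤ r2)
    (hβ1 : β < r1 + r2)
    (hb : β - (min r2 (1 - r1) - t2) ≤ b) :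
    min (max (1 - r1 - max (β - b) 0) 0)
        (if r1 + t2 ≤ b then max (1 - r1 - t2) 0 + max (β - r1 - t2) 0
         else max (1 - r1 - t2 - max (β - b) 0) 0)
      ≥ min (max (1 - r1) 0) (max (1 - r1 - r2) 0 + max (β - r1 - r2) 0) := by
  have hloss := interference_loss_le ht2' hb
  refine (cmo_diversity_le_posPart hβ1).trans (le_min ?_ ?_)
  · exact max_le_max_right 0 (by linarith)
  · split_ifs
    · exact le_add_of_le_of_nonneg (max_le_max_right 0 (by linarith)) (le_max_right _ _)
    · exact max_le_max_right 0 (by linarith)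

/-- Part 3 of the structural lemma: for `β < r1 + r2` and
`b ≥ β − (min{r2, 1−r1} − t2)`, the Han–Kobayashi receiver-1 diversity
dominates the common-message-only one. -/
theorem stmt_5 (r1 r2 β t2 b : ℝ) (hr1 : 0 ≤ r1) (hr1' : r1 ≤ 1)
    (hr2 : 0 ≤ r2) (hr2' : r2 ≤ 1) (ht2 : 0 ≤ t2) (ht2' : t2 ≤ r2)
    (hβ0 : 0 ≤ β) (hβ1 : β < r1 + r2) (hβ3 : β ≤ 1)
    (hb : β - (min r2 (1 - r1) - t2) ≤ b) :
    min (max (1 - r1 - max (β - b) 0) 0)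
        (if r1 + t2 ≤ b then max (1 - r1 - t2) 0 + max (β - r1 - t2) 0
         else max (1 - r1 - t2 - max (β - b) 0) 0)
      ≥ min (max (1 - r1) 0) (max (1 - r1 - r2) 0 + max (β - r1 - r2) 0) :=
  stmt_5_general r1 r2 β t2 b ht2 ht2' hβ1 hb
end

section
/- Let [x]⁺ := max(x,0), fix 0 ≤ r1 ≤ 1, 0 ≤ r2 ≤ 1, 0 ≤ β ≤ 1 with r1 + r2 ≤ β < r1 + 2r2, and let D ∈ ℝ with max{[1+β−2(r1+r2)]⁺, [1−(β+2r1)/3]⁺} ≤ D ≤ [1−r1]⁺. Then the choice b* = D − 1 + r1 + β and t2* = (1 + β − 2r1 − D)/2 satisfies d1_HK(t2*, b*) ≥ D and d2_HK(t2*, b*) = (1/2)·[5 − β − 4r1 − 2r2 − 3D]⁺, where d1_HK(t2,b) := min{[1−r1−[β−b]⁺]⁺, ([1−r1−t2]⁺ + [β−r1−t2]⁺ if b ≥ r1+t2 else [1−r1−t2−[β−b]⁺]⁺)} and d2_HK(t2,b) := min{[1−r2]⁺, [1−r2−b+t2]⁺}. -/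
/-! The power split `b*` makes `β - b* = 1 - r1 - D`, so the first term of `d1` is at least `D`,
and `t2*` makes the two common-message terms sum to `D` before truncation. The lower bound
`D ≥ 1 - (β + 2 r1)/3` is precisely the branch condition `b* ≥ r1 + t2*`, and (as `r1 ≥ 0`) it also
keeps `1 - r2 - b* + t2*` below `1 - r2`, so the second receiver's minimum is attained by that term. -/

lemma le_max_sub_max_sub_zero {a D : ℝ} (hD : 0 ≤ D) (hDa : D ≤ max a 0) :
    D ≤ max (a - max (a - D) 0) 0 := by
  rcases le_total D a with h | h
  · rw [max_eq_left (sub_nonneg.2 h), sub_sub_cancel, max_eq_left hD]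
  · rwa [max_eq_right (sub_nonpos.2 h), sub_zero]

lemma min_max_zero_eq_right {x y : ℝ} (h : y ≤ x) : min (max x 0) (max y 0) = max y 0 :=
  min_eq_right (max_le_max_right 0 h)

lemma half_mul_max_zero (x : ℝ) : (1 / 2) * max x 0 = max (x / 2) 0 := by
  rw [mul_comm, max_mul_of_nonneg _ _ (by norm_num : (0 : ℝ) ≤ 1 / 2)]
  ring_nf

theorem stmt_9_general (r1 r2 β D : ℝ) (hr1 : 0 ≤ r1)
    (hD1 : max (max (1 + β - 2 * (r1 + r2)) 0) (max (1 - (β + 2 * r1) / 3) 0) ≤ D)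
    (hD2 : D ≤ max (1 - r1) 0) :
    (fun t2 b : ℝ =>
        min (max (1 - r1 - max (β - b) 0) 0)
          (if r1 + t2 ≤ b then max (1 - r1 - t2) 0 + max (β - r1 - t2) 0
           else max (1 - r1 - t2 - max (β - b) 0) 0))
      ((1 + β - 2 * r1 - D) / 2) (D - 1 + r1 + β) ≥ D ∧
    (fun t2 b : ℝ => min (max (1 - r2) 0) (max (1 - r2 - b + t2) 0))
      ((1 + β - 2 * r1 - D) / 2) (D - 1 + r1 + β)
      = (1 / 2) * max (5 - β - 4 * r1 - 2 * r2 - 3 * D) 0 := by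
  have hD0 : 0 ≤ D := (le_max_right _ _).trans ((le_max_left _ _).trans hD1)
  have hD3 : 1 - (β + 2 * r1) / 3 ≤ D := (le_max_left _ _).trans ((le_max_right _ _).trans hD1)
  have hsplit : r1 + (1 + β - 2 * r1 - D) / 2 ≤ D - 1 + r1 + β := by linarith
  have hgap : β - (D - 1 + r1 + β) = 1 - r1 - D := by ring
  have hrate : 1 - r2 - (D - 1 + r1 + β) + (1 + β - 2 * r1 - D) / 2
      = (5 - β - 4 * r1 - 2 * r2 - 3 * D) / 2 := by ring
  simp only [if_pos hsplit, hgap, hrate]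
  refine ⟨le_min (le_max_sub_max_sub_zero hD0 hD2) ?_, ?_⟩
  · calc D = (1 - r1 - (1 + β - 2 * r1 - D) / 2) + (β - r1 - (1 + β - 2 * r1 - D) / 2) := by ring
      _ ≤ _ := add_le_add (le_max_left _ _) (le_max_left _ _)
  · rw [min_max_zero_eq_right (by linarith), half_mul_max_zero]

/-- Achievability of the sloped segment of the diversity tradeoff curve in
the regime `r1 + r2 ≤ β < r1 + 2 r2`. -/
theorem stmt_9 (r1 r2 β D : ℝ) (hr1 : 0 ≤ r1) (hr1' : r1 ≤ 1)
    (hr2 : 0 ≤ r2) (hr2' : r2 ≤ 1) (hβ0 : 0 ≤ β) (hβ3 : β ≤ 1)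
    (hβ1 : r1 + r2 ≤ β) (hβ2 : β < r1 + 2 * r2)
    (hD1 : max (max (1 + β - 2 * (r1 + r2)) 0) (max (1 - (β + 2 * r1) / 3) 0) ≤ D)
    (hD2 : D ≤ max (1 - r1) 0) :
    (fun t2 b : ℝ =>
        min (max (1 - r1 - max (β - b) 0) 0)
          (if r1 + t2 ≤ b then max (1 - r1 - t2) 0 + max (β - r1 - t2) 0
           else max (1 - r1 - t2 - max (β - b) 0) 0))
      ((1 + β - 2 * r1 - D) / 2) (D - 1 + r1 + β) ≥ D ∧
    (fun t2 b : ℝ => min (max (1 - r2) 0) (max (1 - r2 - b + t2) 0))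
      ((1 + β - 2 * r1 - D) / 2) (D - 1 + r1 + β)
      = (1 / 2) * max (5 - β - 4 * r1 - 2 * r2 - 3 * D) 0 :=
  stmt_9_general r1 r2 β D hr1 hD1 hD2
end

section
/- Let [x]⁺ := max(x,0), fix 0 ≤ r1 ≤ 1, 0 ≤ r2 ≤ 1, 0 < β ≤ 1 with β < r1 + r2, and let D satisfy [1−r1−r2]⁺ ≤ D < [1−r1−min{r2,β}]⁺. Then the choice b* = β and t2* = 1 − r1 − D satisfies 0 ≤ t2* ≤ r2, d1_HK(t2*, b*) ≥ D, and d2_HK(t2*, b*) = [1 − max{r2, β}]⁺, where d1_HK(t2,b) := min{[1−r1−[β−b]⁺]⁺, ([1−r1−t2]⁺ + [β−r1−t2]⁺ if b ≥ r1+t2 else [1−r1−t2−[β−b]⁺]⁺)} and d2_HK(t2,b) := min{[1−r2]⁺, [1−r2−b+t2]⁺}. -/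
/-!
With `b = β` the interference term `[β - b]⁺` vanishes, so receiver 1 sees at least
`[1 - r1 - t2]⁺ = D`. The two constraints on `D` force `β < r2` and `D < 1 - r1 - β`, i.e.
`β < t2 ≤ r2`. Then `t2 ≥ b`, so the second term of `d2_HK` is no smaller than the first, and
receiver 2 gets `[1 - r2]⁺ = [1 - max{r2, β}]⁺`.
-/

/-- `d1HK r1 β t2 b` and `d2HK r2 t2 b` are the paper's `d1_HK(t2, b)` and `d2_HK(t2, b)`. -/
noncomputable def d1HK (r1 β t2 b : ℝ) : ℝ :=
  min (max (1 - r1 - max (β - b) 0) 0)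
    (if r1 + t2 ≤ b then max (1 - r1 - t2) 0 + max (β - r1 - t2) 0
     else max (1 - r1 - t2 - max (β - b) 0) 0)

def d2HK (r2 t2 b : ℝ) : ℝ :=
  min (max (1 - r2) 0) (max (1 - r2 - b + t2) 0)

theorem lt_and_lt_sub_of_max_sub_le_of_lt_max_sub_min {a r β D : ℝ}
    (hlow : max (a - r) 0 ≤ D) (hhigh : D < max (a - min r β) 0) : β < r ∧ D < a - β := by
  have hβr : β < r := by
    by_contra! hrβ
    rw [min_eq_left hrβ] at hhigh
    exact (hlow.trans_lt hhigh).false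
  rw [min_eq_right hβr.le] at hhigh
  exact ⟨hβr, (lt_max_iff.mp hhigh).resolve_right ((le_max_right _ _).trans hlow).not_gt⟩

theorem max_sub_le_d1HK_of_eq {r1 β t2 : ℝ} (ht2 : 0 ≤ t2) :
    max (1 - r1 - t2) 0 ≤ d1HK r1 β t2 β := by
  have hfirst : max (1 - r1 - t2) 0 ≤ max (1 - r1) 0 := max_le_max (by linarith) le_rfl
  simp only [d1HK, sub_self, max_self, sub_zero]
  split_ifs
  · exact le_min hfirst (le_add_of_nonneg_right (le_max_right _ _))
  · exact le_min hfirst le_rfl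

theorem d2HK_of_le {r2 t2 b : ℝ} (hbt : b ≤ t2) : d2HK r2 t2 b = max (1 - r2) 0 :=
  min_eq_left (max_le_max (by linarith) le_rfl)

theorem stmt_10_general (r1 r2 β D : ℝ) (hβ0 : 0 < β)
    (hD1 : max (1 - r1 - r2) 0 ≤ D) (hD2 : D < max (1 - r1 - min r2 β) 0) :
    0 ≤ 1 - r1 - D ∧ 1 - r1 - D ≤ r2 ∧
    (fun t2 b : ℝ =>
        min (max (1 - r1 - max (β - b) 0) 0)
          (if r1 + t2 ≤ b then max (1 - r1 - t2) 0 + max (β - r1 - t2) 0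
           else max (1 - r1 - t2 - max (β - b) 0) 0))
      (1 - r1 - D) β ≥ D ∧
    (fun t2 b : ℝ => min (max (1 - r2) 0) (max (1 - r2 - b + t2) 0))
      (1 - r1 - D) β = max (1 - max r2 β) 0 := by
  obtain ⟨hβr2, hDβ⟩ := lt_and_lt_sub_of_max_sub_le_of_lt_max_sub_min hD1 hD2
  have hβt2 : β ≤ 1 - r1 - D := by linarith
  refine ⟨by linarith, by linarith [le_max_left (1 - r1 - r2) 0], ?_, ?_⟩
  · show D ≤ d1HK r1 β (1 - r1 - D) β
    calc D ≤ max (1 - r1 - (1 - r1 - D)) 0 := by rw [sub_sub_cancel]; exact le_max_left _ _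
      _ ≤ _ := max_sub_le_d1HK_of_eq (by linarith)
  · rw [max_eq_left hβr2.le]
    exact d2HK_of_le hβt2

/-- First segment of the diversity tradeoff curve in the regime `β < r1 + r2`. -/
theorem stmt_10 (r1 r2 β D : ℝ) (hr1 : 0 ≤ r1) (hr1' : r1 ≤ 1)
    (hr2 : 0 ≤ r2) (hr2' : r2 ≤ 1) (hβ0 : 0 < β) (hβ3 : β ≤ 1)
    (hβ1 : β < r1 + r2)
    (hD1 : max (1 - r1 - r2) 0 ≤ D) (hD2 : D < max (1 - r1 - min r2 β) 0) :
    0 ≤ 1 - r1 - D ∧ 1 - r1 - D ≤ r2 ∧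
    (fun t2 b : ℝ =>
        min (max (1 - r1 - max (β - b) 0) 0)
          (if r1 + t2 ≤ b then max (1 - r1 - t2) 0 + max (β - r1 - t2) 0
           else max (1 - r1 - t2 - max (β - b) 0) 0))
      (1 - r1 - D) β ≥ D ∧
    (fun t2 b : ℝ => min (max (1 - r2) 0) (max (1 - r2 - b + t2) 0))
      (1 - r1 - D) β = max (1 - max r2 β) 0 :=
  stmt_10_general r1 r2 β D hβ0 hD1 hD2
end

section
/- Let [x]⁺ := max(x,0), fix 0 ≤ r1 ≤ 1, 0 ≤ r2 ≤ 1, 0 ≤ β ≤ 1 with r1 + r2 ≤ β < r1 + 2r2, and let t2, b satisfy 0 ≤ t2 ≤ r2 and b ≥ max{r1 + t2, 2β − (r1 + 2r2)}. If d1_HK(t2,b) ≥ max{[1+β−2(r1+r2)]⁺, [1−(β+2r1)/3]⁺}, then d2_HK(t2,b) ≤ (1/2)[5 − β − 4r1 − 2r2 − 3·d1_HK(t2,b)]⁺, where d1_HK(t2,b) := min{[1−r1−[β−b]⁺]⁺, ([1−r1−t2]⁺ + [β−r1−t2]⁺ if b ≥ r1+t2 else [1−r1−t2−[β−b]⁺]⁺)}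 and d2_HK(t2,b) := min{[1−r2]⁺, [1−r2−b+t2]⁺}. -/
/-!
Since `b ≥ r1 + t2`, both positive parts in the second argument of the minimum defining `d1_HK`
are their arguments, so `d1_HK ≤ 1 + β - 2 r1 - 2 t2`; also `d1_HK ≤ 1 - r1 - [β - b]⁺` unless
`d1_HK = 0`. Weighting these two bounds `2 : 1` gives `3 d1_HK ≤ 3 - β - 4 r1 + 2 (b - t2)`
(trivially so when `d1_HK = 0`, as `b - t2 ≥ r1`), while `d2_HK ≤ [1 - r2 - (b - t2)]⁺`;
eliminating `b - t2` between the two yields the claim.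
-/

noncomputable def hkDiversity₁ (r1 β t2 b : ℝ) : ℝ :=
  min (max (1 - r1 - max (β - b) 0) 0)
    (if r1 + t2 ≤ b then max (1 - r1 - t2) 0 + max (β - r1 - t2) 0
     else max (1 - r1 - t2 - max (β - b) 0) 0)

noncomputable def hkDiversity₂ (r2 t2 b : ℝ) : ℝ :=
  min (max (1 - r2) 0) (max (1 - r2 - b + t2) 0)

lemma three_mul_hkDiversity₁_le {r1 β t2 b : ℝ} (hb : r1 + t2 ≤ b) (hβ : r1 + t2 ≤ β)
    (hβ1 : β ≤ 1) (hr1 : r1 ≤ 1) :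
    3 * hkDiversity₁ r1 β t2 b ≤ 3 - β - 4 * r1 + 2 * (b - t2) := by
  rw [hkDiversity₁, if_pos hb, max_eq_left (by linarith : 0 ≤ 1 - r1 - t2),
    max_eq_left (by linarith : 0 ≤ β - r1 - t2)]
  rcases le_total (1 - r1 - max (β - b) 0) 0 with h | h
  · rw [max_eq_right h]
    linarith [min_le_left (0 : ℝ) (1 - r1 - t2 + (β - r1 - t2))]
  · rw [max_eq_left h]
    linarith [min_le_left (1 - r1 - max (β - b) 0) (1 - r1 - t2 + (β - r1 - t2)),
      min_le_right (1 - r1 - max (β - b) 0) (1 - r1 - t2 + (β - r1 - t2)), le_max_left (β - b) 0]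

lemma max_zero_le_half_mul_max_zero {x y : ℝ} (h : 2 * x ≤ y) :
    max x 0 ≤ 1 / 2 * max y 0 :=
  max_le (by linarith [le_max_left y 0]) (by positivity)

theorem stmt_19_general (r1 r2 β t2 b : ℝ) (hr1' : r1 ≤ 1) (hβ3 : β ≤ 1)
    (hβ1 : r1 + r2 ≤ β) (ht2' : t2 ≤ r2)
    (hb : max (r1 + t2) (2 * β - (r1 + 2 * r2)) ≤ b) :
    min (max (1 - r2) 0) (max (1 - r2 - b + t2) 0)
      ≤ (1 / 2) * max (5 - β - 4 * r1 - 2 * r2 - 3 *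
          (min (max (1 - r1 - max (β - b) 0) 0)
            (if r1 + t2 ≤ b then max (1 - r1 - t2) 0 + max (β - r1 - t2) 0
             else max (1 - r1 - t2 - max (β - b) 0) 0))) 0 := by
  show hkDiversity₂ r2 t2 b ≤ 1 / 2 * max (5 - β - 4 * r1 - 2 * r2 - 3 * hkDiversity₁ r1 β t2 b) 0
  have hd₁ := three_mul_hkDiversity₁_le (le_of_max_le_left hb) (by linarith) hβ3 hr1'
  calc hkDiversity₂ r2 t2 b ≤ max (1 - r2 - b + t2) 0 := min_le_right _ _
    _ ≤ _ := max_zero_le_half_mul_max_zero (by linarith)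

/-- Converse part of the tradeoff theorem on the sloped segment in the
regime `r1 + r2 ≤ β < r1 + 2 r2`. -/
theorem stmt_19 (r1 r2 β t2 b : ℝ) (hr1 : 0 ≤ r1) (hr1' : r1 ≤ 1)
    (hr2 : 0 ≤ r2) (hr2' : r2 ≤ 1) (hβ0 : 0 ≤ β) (hβ3 : β ≤ 1)
    (hβ1 : r1 + r2 ≤ β) (hβ2 : β < r1 + 2 * r2)
    (ht2 : 0 ≤ t2) (ht2' : t2 ≤ r2)
    (hb : max (r1 + t2) (2 * β - (r1 + 2 * r2)) ≤ b)
    (hD : min (max (1 - r1 - max (β - b) 0) 0)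
          (if r1 + t2 ≤ b then max (1 - r1 - t2) 0 + max (β - r1 - t2) 0
           else max (1 - r1 - t2 - max (β - b) 0) 0)
        ≥ max (max (1 + β - 2 * (r1 + r2)) 0) (max (1 - (β + 2 * r1) / 3) 0)) :
    min (max (1 - r2) 0) (max (1 - r2 - b + t2) 0)
      ≤ (1 / 2) * max (5 - β - 4 * r1 - 2 * r2 - 3 *
          (min (max (1 - r1 - max (β - b) 0) 0)
            (if r1 + t2 ≤ b then max (1 - r1 - t2) 0 + max (β - r1 - t2) 0
             else max (1 - r1 - t2 - max (β - b) 0) 0))) 0 :=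
  stmt_19_general r1 r2 β t2 b hr1' hβ3 hβ1 ht2' hb
end
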